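/- arXiv:1810.04416 — 2 statements merged into one kernel-verified Lean document; each statement's English description precedes it below -/
import Mathlib

section
/- Let D ∈ ℕ₊ and let h : ℝ^D → ℂ be a positive definite continuous function, let Q ∈ ℕ₊, α_1,…,α_Q > 0, ω_1,…,ω_Q ∈ ℝ^D and γ_1,…,γ_Q ∈ ℝ^D with strictly positive entries. Then the generalized spectral kernel k_GS(τ) = Σ_{q=1}^Q α_q · h(τ ∘ γ_q) · exp(2πi ω_q·τ) is a positive definite function on ℝ^D, i.e. (x, x') ↦ k_GS(x − x') is a positive definite kernel. -/
open MeasureTheory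
open scoped BigOperators

noncomputable section

/-- `k` is a positive definite kernel on `ℝ^D`: every quadratic form
`∑ i j, conj (c i) * c j * k (x i) (x j)` is a nonnegative real number. -/
def IsPosDefKernel {D : ℕ} (k : (Fin D → ℝ) → (Fin D → ℝ) → ℂ) : Prop :=
  ∀ (n : ℕ) (x : Fin n → Fin D → ℝ) (c : Fin n → ℂ),
    0 ≤ (∑ i, ∑ j, (starRingEnd ℂ) (c i) * c j * k (x i) (x j)).re ∧
      (∑ i, ∑ j, (starRingEnd ℂ) (c i) * c j * k (x i) (x j)).im = 0

/-- Euclidean dot product on `ℝ^D`. -/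
def dotR {D : ℕ} (x y : Fin D → ℝ) : ℝ := ∑ d, x d * y d

/-- `exp(2 π i ⟨ω, x⟩)`. -/
def e2πi {D : ℕ} (ω x : Fin D → ℝ) : ℂ :=
  Complex.exp (2 * (Real.pi : ℂ) * Complex.I * ((dotR ω x : ℝ) : ℂ))

/-! Positive definite kernels form a convex cone, so it suffices that each summand of `k_GS` is
positive definite. In the `q`-th summand, `h ((x - x') ∘ γ_q) = h (x ∘ γ_q - x' ∘ γ_q)` is the
positive definite kernel of `h` pulled back along `x ↦ x ∘ γ_q`, and the modulation factor splits
as `exp(2πi⟨ω_q, x - x'⟩) = e(x) · conj (e(x'))`, which is absorbed into the coefficients of the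
quadratic form (`c_i ↦ c_i · conj (e(x_i))`). -/

open ComplexConjugate
open scoped ComplexOrder

lemma dotR_sub {D : ℕ} (ω a b : Fin D → ℝ) : dotR ω (a - b) = dotR ω a - dotR ω b := by
  simp only [dotR, Pi.sub_apply, mul_sub, Finset.sum_sub_distrib]

lemma e2πi_sub {D : ℕ} (ω a b : Fin D → ℝ) : e2πi ω (a - b) = e2πi ω a * conj (e2πi ω b) := by
  unfold e2πi
  rw [← Complex.exp_conj, ← Complex.exp_add, dotR_sub]
  congr 1
  simp only [map_mul, Complex.conj_I, Complex.conj_ofReal, map_ofNat, Complex.ofReal_sub]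
  ring

theorem isPosDefKernel_iff {D : ℕ} {k : (Fin D → ℝ) → (Fin D → ℝ) → ℂ} :
    IsPosDefKernel k ↔ ∀ (n : ℕ) (x : Fin n → Fin D → ℝ) (c : Fin n → ℂ),
      0 ≤ ∑ i, ∑ j, conj (c i) * c j * k (x i) (x j) := by
  simp only [IsPosDefKernel, Complex.nonneg_iff, eq_comm (a := (0 : ℝ))]

namespace IsPosDefKernel

variable {D : ℕ} {k : (Fin D → ℝ) → (Fin D → ℝ) → ℂ}

theorem sum {ι : Type*} (s : Finset ι) {K : ι → (Fin D → ℝ) → (Fin D → ℝ) → ℂ}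
    (hK : ∀ q ∈ s, IsPosDefKernel (K q)) : IsPosDefKernel fun x x' => ∑ q ∈ s, K q x x' := by
  rw [isPosDefKernel_iff]
  intro n x c
  have hform : ∑ i, ∑ j, conj (c i) * c j * ∑ q ∈ s, K q (x i) (x j)
      = ∑ q ∈ s, ∑ i, ∑ j, conj (c i) * c j * K q (x i) (x j) := by
    simp_rw [Finset.mul_sum]
    exact (Finset.sum_congr rfl fun i _ => Finset.sum_comm).trans Finset.sum_comm
  rw [hform]
  exact Finset.sum_nonneg fun q hq => (isPosDefKernel_iff.mp (hK q hq)) n x c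

theorem const_mul {a : ℂ} (ha : 0 ≤ a) (hk : IsPosDefKernel k) :
    IsPosDefKernel fun x x' => a * k x x' := by
  rw [isPosDefKernel_iff] at hk ⊢
  intro n x c
  simpa only [Finset.mul_sum, mul_left_comm a] using mul_nonneg ha (hk n x c)

theorem mul_conj (hk : IsPosDefKernel k) (f : (Fin D → ℝ) → ℂ) :
    IsPosDefKernel fun x x' => k x x' * (f x * conj (f x')) := by
  rw [isPosDefKernel_iff] at hk ⊢
  intro n x c
  convert hk n x fun i => c i * conj (f (x i)) using 3 with i - j -
  simp only [map_mul, Complex.conj_conj]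
  ring

theorem comp {E : ℕ} {κ : (Fin E → ℝ) → (Fin E → ℝ) → ℂ} (hκ : IsPosDefKernel κ)
    (f : (Fin D → ℝ) → Fin E → ℝ) : IsPosDefKernel fun x x' => κ (f x) (f x') :=
  fun n x c => hκ n (f ∘ x) c

end IsPosDefKernel

theorem generalized_spectral_kernel_posdef_general (D : ℕ)
    (h : (Fin D → ℝ) → ℂ)
    (hpd_h : IsPosDefKernel fun x x' => h (x - x'))
    (Q : ℕ)
    (α : Fin Q → ℝ) (hα : ∀ q, 0 < α q)
    (ω : Fin Q → Fin D → ℝ)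
    (γ : Fin Q → Fin D → ℝ) :
    IsPosDefKernel fun x x' =>
      ∑ q, (α q : ℂ) * h ((x - x') * γ q) * e2πi (ω q) (x - x') := by
  have summand (q : Fin Q) : IsPosDefKernel fun x x' =>
      (α q : ℂ) * (h (x * γ q - x' * γ q) * (e2πi (ω q) x * conj (e2πi (ω q) x'))) :=
    ((hpd_h.comp (· * γ q)).mul_conj (e2πi (ω q))).const_mul
      (Complex.zero_le_real.mpr (hα q).le)
  convert IsPosDefKernel.sum Finset.univ fun q _ => summand q using 4 with x x' q
  rw [sub_mul, e2πi_sub, mul_assoc]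

/-- The generalized spectral kernel
`k_GS(τ) = ∑ q, α q • h (τ ∘ γ q) • exp(2πi ⟨ω q, τ⟩)` built from a positive definite
continuous function `h` with positive weights is itself a positive definite function.
Here `τ * γ q` is the Hadamard (elementwise) product. -/
theorem generalized_spectral_kernel_posdef (D : ℕ) (hD : 0 < D)
    (h : (Fin D → ℝ) → ℂ)
    (hpd_h : IsPosDefKernel fun x x' => h (x - x'))
    (hcont_h : Continuous h)
    (Q : ℕ) (hQ : 0 < Q)
    (α : Fin Q → ℝ) (hα : ∀ q, 0 < α q)
    (ω : Fin Q → Fin D → ℝ)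
    (γ : Fin Q → Fin D → ℝ) (hγ : ∀ q d, 0 < γ q d) :
    IsPosDefKernel fun x x' =>
      ∑ q, (α q : ℂ) * h ((x - x') * γ q) * e2πi (ω q) (x - x') :=
  generalized_spectral_kernel_posdef_general D h hpd_h Q α hα ω γ
end
end

section
/- Let D, Q ∈ ℕ₊, let α_1,…,α_Q ≥ 0, ω_1,…,ω_Q ∈ ℝ^D, and let Σ_1,…,Σ_Q be real symmetric positive semidefinite D×D matrices. Then the spectral mixture kernel k_SM(τ) = Σ_{q=1}^Q α_q exp(−2π² τᵀ Σ_q τ) cos(2π ω_q·τ) is a positive definite function on ℝ^D, i.e. (x, x') ↦ k_SM(x − x') is a positive definite kernel. -/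
/-!
Each summand is the Hadamard product of the Gaussian matrix `exp (-(xᵢ - xⱼ)ᵀ S (xᵢ - xⱼ))` and
the matrix `cos (aᵢ - aⱼ) = cos aᵢ cos aⱼ + sin aᵢ sin aⱼ`, a sum of two rank-one positive
semidefinite matrices; so by the Schur product theorem it suffices to treat the Gaussian. Expanding
the quadratic form, its entries are `eᵢ eⱼ exp (2 xᵢᵀ S xⱼ)` with `eᵢ = exp (-xᵢᵀ S xᵢ)`. The Gram
matrix `xᵢᵀ S xⱼ` is positive semidefinite, hence so are its Hadamard powers, and the entrywise
exponential is a limit of their nonnegative combinations in the closed cone of positive semidefinite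
matrices. Finally, a real positive semidefinite matrix stays positive semidefinite over `ℂ`.
-/

open MeasureTheory Matrix
open scoped BigOperators

noncomputable section

open scoped ComplexOrder

theorem dotR_eq_dotProduct {D : ℕ} (x y : Fin D → ℝ) : dotR x y = x ⬝ᵥ y := rfl

namespace Matrix

theorem IsSymm.dotProduct_mulVec_comm {m R : Type*} [Fintype m] [CommSemiring R]
    {S : Matrix m m R} (hS : S.IsSymm) (x y : m → R) : x ⬝ᵥ (S *ᵥ y) = y ⬝ᵥ (S *ᵥ x) := by
  conv_rhs =>
    rw [← hS, dotProduct_comm, ← vecMul_transpose, transpose_transpose, ← dotProduct_mulVec]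

variable {n : Type*} [Fintype n] {𝕜 : Type*} [RCLike 𝕜]

theorem isClosed_setOf_posSemidef : IsClosed {A : Matrix n n 𝕜 | A.PosSemidef} := by
  simp only [posSemidef_iff_dotProduct_mulVec, IsHermitian, Set.ofPred_and, Set.ofPred_forall]
  refine (isClosed_eq (by fun_prop) continuous_id).inter (isClosed_iInter fun x => ?_)
  exact isClosed_le continuous_const (by fun_prop)

theorem PosSemidef.of_hasSum {A : ℕ → Matrix n n 𝕜} {B : Matrix n n 𝕜}
    (hA : ∀ m, (A m).PosSemidef) (hB : HasSum A B) : B.PosSemidef :=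
  isClosed_setOf_posSemidef.mem_of_tendsto hB
    (Filter.Eventually.of_forall fun s => posSemidef_sum s fun m _ => hA m)

theorem PosSemidef.map_pow {A : Matrix n n 𝕜} (hA : A.PosSemidef) (m : ℕ) :
    (A.map (· ^ m)).PosSemidef := by
  induction m with
  | zero =>
    convert posSemidef_vecMulVec_self_star (fun _ : n => (1 : 𝕜)) using 1
    ext i j
    simp [vecMulVec_apply]
  | succ m ih =>
    convert ih.hadamard hA using 1
    ext i j
    simp [pow_succ]

theorem PosSemidef.map_exp {A : Matrix n n ℝ} (hA : A.PosSemidef) :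
    (A.map Real.exp).PosSemidef := by
  refine PosSemidef.of_hasSum (fun m => (hA.map_pow m).smul (a := (m.factorial : ℝ)⁻¹)
    (by positivity)) (Pi.hasSum.2 fun i => Pi.hasSum.2 fun j => ?_)
  simpa [Real.exp_eq_exp_ℝ, div_eq_inv_mul] using NormedSpace.expSeries_div_hasSum_exp (A i j)

theorem PosSemidef.map_ofReal {A : Matrix n n ℝ} (hA : A.PosSemidef) :
    (A.map ((↑) : ℝ → 𝕜)).PosSemidef := by
  obtain ⟨m, v, rfl⟩ := posSemidef_iff_eq_sum_vecMulVec.1 hA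
  convert posSemidef_sum Finset.univ fun i _ =>
    posSemidef_vecMulVec_self_star (fun j => (v i j : 𝕜)) using 1
  ext j k
  simp [vecMulVec_apply, Matrix.sum_apply]

theorem posSemidef_cos_sub (a : n → ℝ) : (of fun i j => Real.cos (a i - a j)).PosSemidef := by
  convert (posSemidef_vecMulVec_self_star (Real.cos ∘ a)).add
    (posSemidef_vecMulVec_self_star (Real.sin ∘ a)) using 1
  ext i j
  simp [vecMulVec_apply, Real.cos_sub]

variable {m : Type*} [Fintype m] {S : Matrix m m ℝ}

theorem PosSemidef.posSemidef_gaussianKernel (hS : S.PosSemidef) (x : n → m → ℝ) :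
    (of fun i j => Real.exp (-((x i - x j) ⬝ᵥ (S *ᵥ (x i - x j))))).PosSemidef := by
  set e : n → ℝ := fun i => Real.exp (-(x i ⬝ᵥ (S *ᵥ x i)))
  have hgram : (of x * S * (of x)ᴴ).PosSemidef := hS.mul_mul_conjTranspose_same (of x)
  have key : (of fun i j => Real.exp (-((x i - x j) ⬝ᵥ (S *ᵥ (x i - x j))))) =
      vecMulVec e e ⊙ ((2 : ℝ) • (of x * S * (of x)ᴴ)).map Real.exp := by
    ext i j
    have hsymm : x j ⬝ᵥ (S *ᵥ x i) = x i ⬝ᵥ (S *ᵥ x j) :=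
      (isHermitian_iff_isSymm.1 hS.isHermitian).dotProduct_mulVec_comm _ _
    have hentry : (of x * S * (of x)ᴴ) i j = x i ⬝ᵥ (S *ᵥ x j) := by
      rw [Matrix.mul_assoc]
      simp [mul_apply, dotProduct, mulVec]
    simp only [of_apply, hadamard_apply, vecMulVec_apply, map_apply, smul_apply, hentry, e,
      ← Real.exp_add, mulVec_sub, dotProduct_sub, sub_dotProduct, hsymm]
    ring_nf
  rw [key]
  exact (posSemidef_vecMulVec_self_star e).hadamard ((hgram.smul zero_le_two).map_exp)

theorem PosSemidef.posSemidef_gaussianKernel_mul_cos (hS : S.PosSemidef) (ω : m → ℝ)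
    (x : n → m → ℝ) :
    (of fun i j => Real.exp (-((x i - x j) ⬝ᵥ (S *ᵥ (x i - x j)))) *
      Real.cos (ω ⬝ᵥ (x i - x j))).PosSemidef := by
  have key : (of fun i j => Real.exp (-((x i - x j) ⬝ᵥ (S *ᵥ (x i - x j)))) *
      Real.cos (ω ⬝ᵥ (x i - x j))) =
      (of fun i j => Real.exp (-((x i - x j) ⬝ᵥ (S *ᵥ (x i - x j))))) ⊙
        of fun i j => Real.cos (ω ⬝ᵥ x i - ω ⬝ᵥ x j) := by
    ext i j
    simp [dotProduct_sub]
  rw [key]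
  exact (hS.posSemidef_gaussianKernel x).hadamard (posSemidef_cos_sub _)

end Matrix

theorem isPosDefKernel_ofReal_of_posSemidef {D : ℕ} (k : (Fin D → ℝ) → (Fin D → ℝ) → ℝ)
    (hk : ∀ (n : ℕ) (x : Fin n → Fin D → ℝ), (of fun i j => k (x i) (x j)).PosSemidef) :
    IsPosDefKernel fun x y => (k x y : ℂ) := by
  intro n x c
  have h : 0 ≤ ∑ i, ∑ j, (starRingEnd ℂ) (c i) * c j * k (x i) (x j) := by
    simpa [dotProduct, mulVec, Finset.mul_sum, mul_comm, mul_assoc, mul_left_comm] using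
      ((hk n x).map_ofReal (𝕜 := ℂ)).dotProduct_mulVec_nonneg c
  rw [Complex.nonneg_iff] at h
  exact ⟨h.1, h.2.symm⟩

theorem spectral_mixture_posdef_general (D Q : ℕ)
    (α : Fin Q → ℝ) (hα : ∀ q, 0 ≤ α q)
    (ω : Fin Q → Fin D → ℝ)
    (S : Fin Q → Matrix (Fin D) (Fin D) ℝ) (hS : ∀ q, (S q).PosSemidef) :
    IsPosDefKernel fun x x' =>
      ((∑ q, α q * Real.exp (-(2 * Real.pi ^ 2) * ((x - x') ⬝ᵥ (S q *ᵥ (x - x')))) *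
          Real.cos (2 * Real.pi * dotR (ω q) (x - x')) : ℝ) : ℂ) := by
  refine isPosDefKernel_ofReal_of_posSemidef _ fun n x => ?_
  have hq q := ((hS q).smul (by positivity : (0 : ℝ) ≤ 2 * Real.pi ^ 2)
    ).posSemidef_gaussianKernel_mul_cos ((2 * Real.pi) • ω q) x
  convert posSemidef_sum Finset.univ fun q _ => (hq q).smul (hα q) using 1
  ext i j
  simp only [Matrix.sum_apply, Matrix.smul_apply, of_apply, smul_eq_mul, dotR_eq_dotProduct, smul_mulVec,
    dotProduct_smul, smul_dotProduct, neg_mul, mul_assoc]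

/-- The spectral mixture kernel
`k_SM(τ) = ∑ q, α q exp(-2π² τᵀ Σ_q τ) cos(2π ⟨ω_q, τ⟩)` with nonnegative weights and real
symmetric positive semidefinite matrices `Σ_q` is a positive definite function on `ℝ^D`. -/
theorem spectral_mixture_posdef (D Q : ℕ) (hD : 0 < D) (hQ : 0 < Q)
    (α : Fin Q → ℝ) (hα : ∀ q, 0 ≤ α q)
    (ω : Fin Q → Fin D → ℝ)
    (S : Fin Q → Matrix (Fin D) (Fin D) ℝ) (hS : ∀ q, (S q).PosSemidef) :
    IsPosDefKernel fun x x' =>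
      ((∑ q, α q * Real.exp (-(2 * Real.pi ^ 2) * ((x - x') ⬝ᵥ (S q *ᵥ (x - x')))) *
          Real.cos (2 * Real.pi * dotR (ω q) (x - x')) : ℝ) : ℂ) :=
  spectral_mixture_posdef_general D Q α hα ω S hS
end
end
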